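/- Fix k ∈ ℂ. The map q ↦ ψ(k,q), from L²((0,1),ℝ) (potentials extended by zero to ℝ) to ℂ, is Fréchet differentiable at every q₀ ∈ L²((0,1),ℝ), and its Fréchet derivative at q₀ is the bounded linear map h ↦ ∫₀¹ φ(x,k,q₀)·f₊(x,k,q₀)·h(x) dx. -/

import Mathlib

/-!
For potentials `Q₀`, `Q₁`, the Wronskian `φ' f - φ f'` of `φ = φ(·,Q₀)` and `f = f₊(·,Q₁)` has
derivative `(Q₀ - Q₁) φ f` a.e.; it equals `ψ(Q₁)` at `0`, and at `1` it does not depend on `Q₁`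
since `f₊ = e^{ikx}` there. Hence `ψ(Q₁) - ψ(Q₀) = ∫₀¹ (Q₁ - Q₀) φ(·,Q₀) f₊(·,Q₁)`, and the
derivative arises by replacing `f₊(·,Q₁)` with `f₊(·,Q₀)`. The error is `O(‖Q₁ - Q₀‖²)` because
`f₊(·,Q₁) - f₊(·,Q₀)` solves a Volterra equation, and a Grönwall estimate with integrable weight
`|Q₁ - k²|` bounds it by `O(‖Q₁ - Q₀‖)` uniformly on `[0,1]`.
-/

open MeasureTheory Set

noncomputable section

/-- `y` solves `-y'' + q y = E y` on `[0,∞)`: `y` is continuously differentiable with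
derivative `y'`, `y'` is absolutely continuous (an indefinite integral of a locally
integrable `y''`), and the equation holds for a.e. `x ≥ 0`. -/
def SchrodingerSol (q : ℝ → ℂ) (E : ℂ) (y y' : ℝ → ℂ) : Prop :=
  (∀ x : ℝ, 0 ≤ x → HasDerivAt y (y' x) x) ∧
  ∃ y'' : ℝ → ℂ,
    (∀ X : ℝ, IntegrableOn y'' (Icc 0 X)) ∧
    (∀ x : ℝ, 0 ≤ x → y' x = y' 0 + ∫ t in (0:ℝ)..x, y'' t) ∧
    (∀ᵐ x : ℝ, 0 ≤ x → -y'' x + q x * y x = E * y x)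

/-- The Jost solution `f₊(·,k)` (with derivative `f'`): it solves
`-y'' + q y = k² y` and equals `e^{ikx}` for `x ≥ 1`. -/
def IsJost (q : ℝ → ℂ) (k : ℂ) (f f' : ℝ → ℂ) : Prop :=
  SchrodingerSol q (k ^ 2) f f' ∧
  ∀ x : ℝ, 1 ≤ x → f x = Complex.exp (Complex.I * k * (x : ℂ))

/-- The fundamental solution `φ(·,k)` (with derivative `y'`): it solves
`-y'' + q y = k² y` with `y(0) = 0`, `y'(0) = 1`. -/
def IsPhi (q : ℝ → ℂ) (k : ℂ) (y y' : ℝ → ℂ) : Prop :=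
  SchrodingerSol q (k ^ 2) y y' ∧ y 0 = 0 ∧ y' 0 = 1

/-- A potential in `L²((0,1),ℝ)` extended by zero to the whole line (as a
complex-valued function). -/
def extQ (q : Lp ℝ 2 (volume.restrict (Ioo (0:ℝ) 1))) : ℝ → ℂ :=
  fun x => ((((Ioo (0:ℝ) 1).indicator (q : ℝ → ℝ) x) : ℝ) : ℂ)

open Filter
open scoped ENNReal

theorem AbsolutelyContinuousOnInterval.ofReal {f : ℝ → ℝ} {a b : ℝ}
    (hf : AbsolutelyContinuousOnInterval f a b) :
    AbsolutelyContinuousOnInterval (fun x => (f x : ℂ)) a b := by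
  simpa only [AbsolutelyContinuousOnInterval, Complex.dist_eq, ← Complex.ofReal_sub,
    Complex.norm_real, ← Real.dist_eq, Real.norm_eq_abs] using hf

theorem AbsolutelyContinuousOnInterval.congr {X : Type*} [PseudoMetricSpace X] {f g : ℝ → X}
    {a b : ℝ} (hf : AbsolutelyContinuousOnInterval f a b) (hfg : EqOn f g (uIcc a b)) :
    AbsolutelyContinuousOnInterval g a b := by
  refine hf.congr' (eventually_inf_principal.2 (Eventually.of_forall fun E hE => ?_))
  exact Finset.sum_congr rfl fun i hi => by rw [hfg (hE.1 i hi).1, hfg (hE.1 i hi).2]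

theorem IntervalIntegrable.absolutelyContinuousOnInterval_intervalIntegral_complex
    {f : ℝ → ℂ} {a b c : ℝ} (h : IntervalIntegrable f volume a b) (hc : c ∈ uIcc a b) :
    AbsolutelyContinuousOnInterval (fun x ↦ ∫ v in c..x, f v) a b := by
  have hre : IntervalIntegrable (fun x => (f x).re) volume a b :=
    intervalIntegrable_iff.2 (intervalIntegrable_iff.1 h).re
  have him : IntervalIntegrable (fun x => (f x).im) volume a b :=
    intervalIntegrable_iff.2 (intervalIntegrable_iff.1 h).im
  refine ((hre.absolutelyContinuousOnInterval_intervalIntegral hc).ofReal.fun_add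
    ((him.absolutelyContinuousOnInterval_intervalIntegral hc).ofReal.const_smul
      Complex.I)).congr fun x hx => ?_
  have hcx : IntervalIntegrable f volume c x := h.mono_set (uIcc_subset_uIcc hc hx)
  have hre_eq : ∫ v in c..x, (f v).re = (∫ v in c..x, f v).re :=
    Complex.reCLM.intervalIntegral_comp_comm hcx
  have him_eq : ∫ v in c..x, (f v).im = (∫ v in c..x, f v).im :=
    Complex.imCLM.intervalIntegral_comp_comm hcx
  simp only [hre_eq, him_eq, smul_eq_mul, mul_comm Complex.I]
  exact Complex.re_add_im _

theorem AbsolutelyContinuousOnInterval.integral_eq_sub_of_ae_hasDerivAt {f f' : ℝ → ℂ}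
    {a b : ℝ} (hf : AbsolutelyContinuousOnInterval f a b)
    (hderiv : ∀ᵐ x, x ∈ uIcc a b → HasDerivAt f (f' x) x)
    (hint : IntervalIntegrable f' volume a b) :
    ∫ x in a..b, f' x = f b - f a := by
  have hac : AbsolutelyContinuousOnInterval (fun x => f x - ∫ t in a..x, f' t) a b :=
    hf.fun_sub (hint.absolutelyContinuousOnInterval_intervalIntegral_complex left_mem_uIcc)
  have hzero : ∀ᵐ x, x ∈ uIcc a b → HasDerivAt (fun x => f x - ∫ t in a..x, f' t) 0 x := by
    filter_upwards [hderiv, hint.ae_hasDerivAt_integral] with x hfx hFx hx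
    simpa using (hfx hx).fun_sub (hFx hx a left_mem_uIcc)
  obtain ⟨C, hC⟩ := hac.const_of_ae_hasDerivAt_zero hzero
  have ha := hC a left_mem_uIcc
  have hb := hC b right_mem_uIcc
  simp only [intervalIntegral.integral_same, sub_zero] at ha
  linear_combination ha - hb

theorem intervalIntegral_mul_le_mul_integral {g u : ℝ → ℝ} {a b C : ℝ} (hab : a ≤ b)
    (hg : IntervalIntegrable g volume a b)
    (hgu : IntervalIntegrable (fun t => g t * u t) volume a b)
    (hg0 : ∀ t ∈ Icc a b, 0 ≤ g t) (hu : ∀ t ∈ Icc a b, u t ≤ C) :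
    ∫ t in a..b, g t * u t ≤ C * ∫ t in a..b, g t := by
  rw [← intervalIntegral.integral_const_mul]
  refine intervalIntegral.integral_mono_on hab hgu (hg.const_mul C) fun t ht => ?_
  rw [mul_comm C]
  exact mul_le_mul_of_nonneg_left (hu t ht) (hg0 t ht)

theorem le_two_mul_add_of_integral_le_half {g u : ℝ → ℝ} {x c b A B : ℝ} (hxc : x ≤ c)
    (hcb : c ≤ b) (hg : IntegrableOn g (Icc x b)) (hg0 : ∀ t ∈ Icc x b, 0 ≤ g t)
    (hu : ContinuousOn u (Icc x b)) (hu0 : ∀ t ∈ Icc x b, 0 ≤ u t)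
    (hineq : ∀ t ∈ Icc x c, u t ≤ A + ∫ s in t..b, g s * u s)
    (hB : ∀ t ∈ Icc c b, u t ≤ B) (hhalf : ∫ s in x..c, g s ≤ 1 / 2) :
    ∀ t ∈ Icc x c, u t ≤ 2 * (A + B * ∫ s in c..b, g s) := by
  have hsub : Icc x c ⊆ Icc x b := Icc_subset_Icc_right hcb
  obtain ⟨m, hm, hmax⟩ := isCompact_Icc.exists_isMaxOn (nonempty_Icc.2 hxc) (hu.mono hsub)
  have hgu : IntegrableOn (fun t => g t * u t) (Icc x b) :=
    hg.mul_continuousOn hu isCompact_Icc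
  have hii : ∀ {s₁ s₂}, s₁ ∈ Icc x b → s₂ ∈ Icc x b →
      IntervalIntegrable g volume s₁ s₂ ∧ IntervalIntegrable (fun t => g t * u t) volume s₁ s₂ :=
    fun h₁ h₂ => ⟨(hg.mono_set (uIcc_subset_Icc h₁ h₂)).intervalIntegrable,
      (hgu.mono_set (uIcc_subset_Icc h₁ h₂)).intervalIntegrable⟩
  have hmb : m ∈ Icc x b := hsub hm
  have hcmem : c ∈ Icc x b := ⟨hxc, hcb⟩
  have hbmem : b ∈ Icc x b := ⟨hxc.trans hcb, le_rfl⟩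
  have hnear : ∫ s in m..c, g s * u s ≤ u m * (1 / 2) := by
    have hxm : 0 ≤ ∫ s in x..m, g s := intervalIntegral.integral_nonneg hm.1
      fun t ht => hg0 t ⟨ht.1, ht.2.trans hmb.2⟩
    have hsplit := intervalIntegral.integral_add_adjacent_intervals
      (hii ⟨le_rfl, hxc.trans hcb⟩ hmb).1 (hii hmb hcmem).1
    calc ∫ s in m..c, g s * u s ≤ u m * ∫ s in m..c, g s :=
          intervalIntegral_mul_le_mul_integral hm.2 (hii hmb hcmem).1 (hii hmb hcmem).2
            (fun t ht => hg0 t ⟨hm.1.trans ht.1, ht.2.trans hcb⟩)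
            (fun t ht => isMaxOn_iff.1 hmax t ⟨hm.1.trans ht.1, ht.2⟩)
      _ ≤ u m * (1 / 2) := mul_le_mul_of_nonneg_left (by linarith) (hu0 m hmb)
  have hfar : ∫ s in c..b, g s * u s ≤ B * ∫ s in c..b, g s :=
    intervalIntegral_mul_le_mul_integral hcb (hii hcmem hbmem).1 (hii hcmem hbmem).2
      (fun t ht => hg0 t ⟨hxc.trans ht.1, ht.2⟩) hB
  have hum : u m ≤ A + u m * (1 / 2) + B * ∫ s in c..b, g s := by
    have hsplit := intervalIntegral.integral_add_adjacent_intervals (hii hmb hcmem).2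
      (hii hcmem hbmem).2
    linarith [hineq m hm]
  intro t ht
  linarith [isMaxOn_iff.1 hmax t ht]

/-- The weight is only integrable, so `[x, b]` is cut where `∫ g` crosses the levels `n / 2`;
each new piece multiplies the bound by at most `n + 1`. -/
theorem le_two_mul_factorial_mul_of_le_add_integral_mul {g u : ℝ → ℝ} {a b A : ℝ}
    (hg : IntegrableOn g (Icc a b)) (hg0 : ∀ t ∈ Icc a b, 0 ≤ g t)
    (hu : ContinuousOn u (Icc a b)) (hu0 : ∀ t ∈ Icc a b, 0 ≤ u t)
    (hineq : ∀ x ∈ Icc a b, u x ≤ A + ∫ t in x..b, g t * u t) (N : ℕ) :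
    ∀ x ∈ Icc a b, ∫ t in x..b, g t ≤ N / 2 → u x ≤ 2 * N.factorial * A := by
  have hii : ∀ {s t}, s ∈ Icc a b → t ∈ Icc a b → IntervalIntegrable g volume s t :=
    fun hs ht => (hg.mono_set (uIcc_subset_Icc hs ht)).intervalIntegrable
  have hstep := fun {x c B : ℝ} (hx : x ∈ Icc a b) (hxc : x ≤ c) (hcb : c ≤ b) =>
    le_two_mul_add_of_integral_le_half (A := A) (B := B) hxc hcb
      (hg.mono_set (Icc_subset_Icc_left hx.1)) (fun t ht => hg0 t ⟨hx.1.trans ht.1, ht.2⟩)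
      (hu.mono (Icc_subset_Icc_left hx.1)) (fun t ht => hu0 t ⟨hx.1.trans ht.1, ht.2⟩)
      (fun t ht => hineq t ⟨hx.1.trans ht.1, ht.2.trans hcb⟩)
  induction N with
  | zero =>
    intro x hx hGx
    have hub : ∀ t ∈ Icc b b, u t ≤ A := fun t ht => by
      rw [Icc_self, mem_singleton_iff] at ht
      simpa [ht] using hineq b ⟨hx.1.trans hx.2, le_rfl⟩
    simpa using hstep hx hx.2 le_rfl hub (by push_cast at hGx; linarith) x ⟨le_rfl, hx.2⟩
  | succ n ih =>
    intro x hx hGx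
    have hb : b ∈ Icc a b := ⟨hx.1.trans hx.2, le_rfl⟩
    have hA : 0 ≤ A := by simpa using (hu0 b hb).trans (hineq b hb)
    by_cases hlow : ∫ t in x..b, g t ≤ n / 2
    · refine (ih x hx hlow).trans (mul_le_mul_of_nonneg_right ?_ hA)
      gcongr
      exact n.le_succ
    obtain ⟨c, hc, hGc⟩ : ∃ c ∈ Icc x b, ∫ t in c..b, g t = n / 2 := by
      have hcont : ContinuousOn (fun c => ∫ t in c..b, g t) (Icc x b) := by
        rw [← uIcc_of_le hx.2]
        exact intervalIntegral.continuousOn_primitive_interval_left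
          (hg.mono_set (by rw [uIcc_of_le hx.2]; exact Icc_subset_Icc_left hx.1))
      refine intermediate_value_Icc' hx.2 hcont ⟨?_, (not_le.1 hlow).le⟩
      simp only [intervalIntegral.integral_same]
      positivity
    have hcmem : c ∈ Icc a b := ⟨hx.1.trans hc.1, hc.2⟩
    have hub : ∀ t ∈ Icc c b, u t ≤ 2 * n.factorial * A := fun t ht =>
      ih t ⟨hcmem.1.trans ht.1, ht.2⟩ (hGc ▸ intervalIntegral.integral_mono_interval ht.1 ht.2
        le_rfl ((ae_restrict_iff' measurableSet_Ioc).2 (ae_of_all _ fun r hr =>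
          hg0 r ⟨hcmem.1.trans hr.1.le, hr.2⟩)) (hii hcmem hb))
    have hhalf : ∫ s in x..c, g s ≤ 1 / 2 := by
      push_cast at hGx
      linarith [intervalIntegral.integral_add_adjacent_intervals (hii hx hcmem) (hii hcmem hb)]
    have hux := hstep hx hc.1 hc.2 hub hhalf x ⟨le_rfl, hc.1⟩
    rw [hGc] at hux
    have hfact : (1 : ℝ) + n * n.factorial ≤ (n + 1).factorial := by
      rw [Nat.factorial_succ]
      push_cast
      nlinarith [(Nat.one_le_cast (α := ℝ)).2 (Nat.factorial_pos n)]
    nlinarith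

def IsPrimitiveOnIci (F F' : ℝ → ℂ) : Prop :=
  (∀ X, IntegrableOn F' (Icc 0 X)) ∧ ∀ x, 0 ≤ x → F x = F 0 + ∫ t in (0:ℝ)..x, F' t

namespace IsPrimitiveOnIci

variable {F F' G G' : ℝ → ℂ}

theorem intervalIntegrable (hF : IsPrimitiveOnIci F F') {a b : ℝ} (ha : 0 ≤ a) (hb : 0 ≤ b) :
    IntervalIntegrable F' volume a b :=
  ((hF.1 (max a b)).mono_set (uIcc_subset_Icc ⟨ha, le_max_left a b⟩
    ⟨hb, le_max_right a b⟩)).intervalIntegrable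

theorem integral_eq_sub (hF : IsPrimitiveOnIci F F') {a b : ℝ} (ha : 0 ≤ a) (hb : 0 ≤ b) :
    ∫ t in a..b, F' t = F b - F a := by
  rw [hF.2 a ha, hF.2 b hb, ← intervalIntegral.integral_interval_sub_left
    (hF.intervalIntegrable le_rfl hb) (hF.intervalIntegrable le_rfl ha)]
  ring

theorem absolutelyContinuousOnInterval (hF : IsPrimitiveOnIci F F') {b : ℝ} (hb : 0 ≤ b) :
    AbsolutelyContinuousOnInterval F 0 b := by
  have hac : AbsolutelyContinuousOnInterval (fun x => ∫ t in (0:ℝ)..x, F' t) 0 b :=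
    IntervalIntegrable.absolutelyContinuousOnInterval_intervalIntegral_complex
      (hF.intervalIntegrable le_rfl hb) left_mem_uIcc
  refine (show AbsolutelyContinuousOnInterval (fun x => F 0 + ∫ t in (0:ℝ)..x, F' t) 0 b by
    simpa only [AbsolutelyContinuousOnInterval, dist_add_left] using hac).congr
    fun x hx => (hF.2 x ?_).symm
  rw [uIcc_of_le hb] at hx
  exact hx.1

theorem continuousOn (hF : IsPrimitiveOnIci F F') {b : ℝ} (hb : 0 ≤ b) :
    ContinuousOn F (Icc 0 b) := by
  simpa [uIcc_of_le hb] using (hF.absolutelyContinuousOnInterval hb).continuousOn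

theorem ae_hasDerivAt (hF : IsPrimitiveOnIci F F') : ∀ᵐ x, 0 < x → HasDerivAt F (F' x) x := by
  have hn : ∀ n : ℕ, ∀ᵐ x, x ∈ uIcc 0 (n : ℝ) → ∀ c ∈ uIcc 0 (n : ℝ),
      HasDerivAt (fun x => ∫ t in c..x, F' t) (F' x) x := fun n =>
    (hF.intervalIntegrable le_rfl n.cast_nonneg).ae_hasDerivAt_integral
  filter_upwards [ae_all_iff.2 hn] with x hx hpos
  obtain ⟨n, hxn⟩ := exists_nat_gt x
  have hmem : x ∈ uIcc 0 (n : ℝ) := by rw [uIcc_of_le n.cast_nonneg]; exact ⟨hpos.le, hxn.le⟩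
  refine ((hx n hmem 0 left_mem_uIcc).const_add (F 0)).congr_of_eventuallyEq ?_
  filter_upwards [Ioi_mem_nhds hpos] with y hy using hF.2 y (le_of_lt hy)

theorem sub (hF : IsPrimitiveOnIci F F') (hG : IsPrimitiveOnIci G G') :
    IsPrimitiveOnIci (fun x => F x - G x) (fun x => F' x - G' x) := by
  refine ⟨fun X => (hF.1 X).sub (hG.1 X), fun x hx => ?_⟩
  rw [intervalIntegral.integral_sub (hF.intervalIntegrable le_rfl hx)
    (hG.intervalIntegrable le_rfl hx)]
  linear_combination hF.2 x hx - hG.2 x hx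

theorem norm_le_integral_norm_of_eq_zero {w w' w'' : ℝ → ℂ}
    (hw : IsPrimitiveOnIci w w') (hw' : IsPrimitiveOnIci w' w'') (h1 : w 1 = 0) (h1' : w' 1 = 0)
    {x : ℝ} (hx : x ∈ Icc (0:ℝ) 1) :
    ‖w x‖ ≤ ∫ t in x..1, ‖w'' t‖ := by
  have hw't : ∀ t ∈ uIoc x 1, ‖w' t‖ ≤ ∫ s in x..1, ‖w'' s‖ := by
    intro t ht
    rw [uIoc_of_le hx.2] at ht
    have ht0 : 0 ≤ t := hx.1.trans ht.1.le
    calc ‖w' t‖ = ‖∫ s in t..1, w'' s‖ := by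
          rw [hw'.integral_eq_sub ht0 zero_le_one, h1', zero_sub, norm_neg]
      _ ≤ ∫ s in t..1, ‖w'' s‖ := intervalIntegral.norm_integral_le_integral_norm ht.2
      _ ≤ ∫ s in x..1, ‖w'' s‖ :=
          intervalIntegral.integral_mono_interval ht.1.le ht.2 le_rfl
            (ae_of_all _ fun _ => norm_nonneg _) (hw'.intervalIntegrable hx.1 zero_le_one).norm
  calc ‖w x‖ = ‖∫ s in x..1, w' s‖ := by
        rw [hw.integral_eq_sub hx.1 zero_le_one, h1, zero_sub, norm_neg]
    _ ≤ (∫ s in x..1, ‖w'' s‖) * |1 - x| := intervalIntegral.norm_integral_le_of_norm_le_const hw't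
    _ ≤ ∫ s in x..1, ‖w'' s‖ := by
        have : 0 ≤ ∫ s in x..1, ‖w'' s‖ :=
          intervalIntegral.integral_nonneg hx.2 fun _ _ => norm_nonneg _
        rw [abs_of_nonneg (by linarith [hx.2])]
        nlinarith [hx.1]

end IsPrimitiveOnIci

namespace SchrodingerSol

variable {Q Q₁ Q₂ : ℝ → ℂ} {E : ℂ} {y y' y₁ y₁' y₂ y₂' : ℝ → ℂ}

theorem exists_isPrimitiveOnIci (hS : SchrodingerSol Q E y y') :
    ∃ y'' : ℝ → ℂ, IsPrimitiveOnIci y y' ∧ IsPrimitiveOnIci y' y'' ∧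
      ∀ᵐ x, 0 ≤ x → y'' x = (Q x - E) * y x := by
  obtain ⟨hy, y'', hint, hrep, hae⟩ := hS
  have h' : IsPrimitiveOnIci y' y'' := ⟨hint, hrep⟩
  refine ⟨y'', ⟨fun X => ?_, fun x hx => ?_⟩, h', ?_⟩
  · exact ((h'.continuousOn (le_max_left 0 X)).integrableOn_Icc).mono_set
      (Icc_subset_Icc_right (le_max_right 0 X))
  · have hcont := h'.continuousOn hx
    rw [intervalIntegral.integral_eq_sub_of_hasDerivAt
      (fun t ht => hy t (by rw [uIcc_of_le hx] at ht; exact ht.1))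
      (hcont.intervalIntegrable_of_Icc hx)]
    ring
  · filter_upwards [hae] with x hx h0
    linear_combination -hx h0

theorem continuousOn (hS : SchrodingerSol Q E y y') {b : ℝ} (hb : 0 ≤ b) :
    ContinuousOn y (Icc 0 b) := by
  obtain ⟨_, hp, -⟩ := hS.exists_isPrimitiveOnIci
  exact hp.continuousOn hb

theorem wronskian_sub (h₁ : SchrodingerSol Q₁ E y₁ y₁') (h₂ : SchrodingerSol Q₂ E y₂ y₂')
    {b : ℝ} (hb : 0 ≤ b) :
    (y₁' b * y₂ b - y₁ b * y₂' b) - (y₁' 0 * y₂ 0 - y₁ 0 * y₂' 0) =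
      ∫ x in (0:ℝ)..b, (Q₁ x - Q₂ x) * y₁ x * y₂ x := by
  obtain ⟨y₁'', hp₁, hp₁', hae₁⟩ := h₁.exists_isPrimitiveOnIci
  obtain ⟨y₂'', hp₂, hp₂', hae₂⟩ := h₂.exists_isPrimitiveOnIci
  have hac : AbsolutelyContinuousOnInterval (fun x => y₁' x * y₂ x - y₁ x * y₂' x) 0 b :=
    ((hp₁'.absolutelyContinuousOnInterval hb).fun_smul
      (hp₂.absolutelyContinuousOnInterval hb)).fun_sub
    ((hp₁.absolutelyContinuousOnInterval hb).fun_smul (hp₂'.absolutelyContinuousOnInterval hb))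
  have hderiv : ∀ᵐ x, x ∈ uIcc 0 b → HasDerivAt (fun x => y₁' x * y₂ x - y₁ x * y₂' x)
      (y₁'' x * y₂ x - y₁ x * y₂'' x) x := by
    filter_upwards [hp₁.ae_hasDerivAt, hp₁'.ae_hasDerivAt, hp₂.ae_hasDerivAt,
      hp₂'.ae_hasDerivAt, Measure.ae_ne volume 0] with x d₁ d₁' d₂ d₂' hx0 hx
    rw [uIcc_of_le hb] at hx
    have hpos : 0 < x := lt_of_le_of_ne hx.1 (Ne.symm hx0)
    exact (((d₁' hpos).fun_mul (d₂ hpos)).fun_sub ((d₁ hpos).fun_mul (d₂' hpos))).congr_deriv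
      (by ring)
  have hint : IntervalIntegrable (fun x => y₁'' x * y₂ x - y₁ x * y₂'' x) volume 0 b :=
    ((hp₁'.intervalIntegrable le_rfl hb).mul_continuousOn
      (by simpa [uIcc_of_le hb] using hp₂.continuousOn hb)).sub
      ((hp₂'.intervalIntegrable le_rfl hb).continuousOn_mul
      (by simpa [uIcc_of_le hb] using hp₁.continuousOn hb))
  rw [← hac.integral_eq_sub_of_ae_hasDerivAt hderiv hint]
  refine intervalIntegral.integral_congr_ae ?_
  filter_upwards [hae₁, hae₂] with x e₁ e₂ hx
  rw [uIoc_of_le hb] at hx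
  rw [e₁ hx.1.le, e₂ hx.1.le]
  ring

theorem norm_sub_le (h₁ : SchrodingerSol Q₁ E y₁ y₁') (h₂ : SchrodingerSol Q₂ E y₂ y₂')
    (hQ₁ : IntegrableOn Q₁ (Icc 0 1)) (hy : y₁ 1 = y₂ 1) (hy' : y₁' 1 = y₂' 1) {N : ℕ}
    (hN : ∫ t in (0:ℝ)..1, ‖Q₁ t - E‖ ≤ N / 2) {x : ℝ} (hx : x ∈ Icc (0:ℝ) 1) :
    ‖y₁ x - y₂ x‖ ≤ 2 * N.factorial * ∫ t in (0:ℝ)..1, ‖(Q₁ t - Q₂ t) * y₂ t‖ := by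
  obtain ⟨y₁'', hp₁, hp₁', hae₁⟩ := h₁.exists_isPrimitiveOnIci
  obtain ⟨y₂'', hp₂, hp₂', hae₂⟩ := h₂.exists_isPrimitiveOnIci
  have hg : IntegrableOn (fun t => ‖Q₁ t - E‖) (Icc 0 1) :=
    (hQ₁.sub (integrableOn_const (by simp))).norm
  have hρ : IntegrableOn (fun t => ‖(Q₁ t - Q₂ t) * y₂ t‖) (Icc 0 1) := by
    refine ((((hQ₁.sub (integrableOn_const (by simp))).mul_continuousOn
      (hp₂.continuousOn zero_le_one) isCompact_Icc).sub (hp₂'.1 1)).congr_fun_ae ?_).norm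
    filter_upwards [ae_restrict_mem measurableSet_Icc, ae_restrict_of_ae hae₂] with t ht e₂
    simp only [Pi.sub_apply, e₂ ht.1]
    ring
  have hu : ContinuousOn (fun t => ‖y₁ t - y₂ t‖) (Icc 0 1) :=
    ((hp₁.continuousOn zero_le_one).sub (hp₂.continuousOn zero_le_one)).norm
  refine le_two_mul_factorial_mul_of_le_add_integral_mul hg (fun _ _ => norm_nonneg _) hu
    (fun _ _ => norm_nonneg _) (fun s hs => ?_) N x hx
    ((intervalIntegral.integral_mono_interval hx.1 hx.2 le_rfl
      (ae_of_all _ fun _ => norm_nonneg _)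
      ((intervalIntegrable_iff_integrableOn_Icc_of_le zero_le_one).2 hg)).trans hN)
  have hii : ∀ {f : ℝ → ℝ}, IntegrableOn f (Icc 0 1) → IntervalIntegrable f volume s 1 :=
    fun hf => (hf.mono_set (uIcc_subset_Icc hs ⟨zero_le_one, le_rfl⟩)).intervalIntegrable
  have hgu := hii (hg.mul_continuousOn hu isCompact_Icc)
  calc ‖y₁ s - y₂ s‖ ≤ ∫ t in s..1, ‖y₁'' t - y₂'' t‖ :=
        (hp₁.sub hp₂).norm_le_integral_norm_of_eq_zero (hp₁'.sub hp₂') (sub_eq_zero.2 hy)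
          (sub_eq_zero.2 hy') hs
    _ ≤ ∫ t in s..1, (‖Q₁ t - E‖ * ‖y₁ t - y₂ t‖ + ‖(Q₁ t - Q₂ t) * y₂ t‖) := by
        refine intervalIntegral.integral_mono_ae_restrict hs.2
          (hii ((hp₁'.1 1).sub (hp₂'.1 1)).norm) (hgu.add (hii hρ)) ?_
        filter_upwards [ae_restrict_mem measurableSet_Icc, ae_restrict_of_ae hae₁,
          ae_restrict_of_ae hae₂] with t ht e₁ e₂
        have ht0 : 0 ≤ t := hs.1.trans ht.1
        rw [e₁ ht0, e₂ ht0, ← norm_mul]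
        exact (norm_add_le _ _).trans_eq' (by ring_nf)
    _ = (∫ t in s..1, ‖Q₁ t - E‖ * ‖y₁ t - y₂ t‖) + ∫ t in s..1, ‖(Q₁ t - Q₂ t) * y₂ t‖ :=
        intervalIntegral.integral_add hgu (hii hρ)
    _ ≤ (∫ t in s..1, ‖Q₁ t - E‖ * ‖y₁ t - y₂ t‖) + ∫ t in (0:ℝ)..1, ‖(Q₁ t - Q₂ t) * y₂ t‖ := by
        gcongr
        exact intervalIntegral.integral_mono_interval hs.1 hs.2 le_rfl
          (ae_of_all _ fun _ => norm_nonneg _)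
          ((intervalIntegrable_iff_integrableOn_Icc_of_le zero_le_one).2 hρ)
    _ = _ := add_comm _ _

end SchrodingerSol

namespace IsJost

variable {Q Q₀ Q₁ : ℝ → ℂ} {k : ℂ} {f f' f₀ f₀' f₁ f₁' φ φ' : ℝ → ℂ}

theorem eq_one (hJ : IsJost Q k f f') : f 1 = Complex.exp (Complex.I * k) := by
  simpa using hJ.2 1 le_rfl

theorem deriv_one (hJ : IsJost Q k f f') :
    f' 1 = Complex.I * k * Complex.exp (Complex.I * k) := by
  have hexp : HasDerivAt (fun t : ℝ => Complex.exp (Complex.I * k * t))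
      (Complex.I * k * Complex.exp (Complex.I * k * (1 : ℝ))) 1 := by
    simpa [mul_comm] using ((hasDerivAt_id (1 : ℝ)).ofReal_comp.const_mul (Complex.I * k)).cexp
  have hwithin : HasDerivWithinAt f (Complex.I * k * Complex.exp (Complex.I * k * (1 : ℝ)))
      (Ici 1) 1 :=
    hexp.hasDerivWithinAt.congr (fun x hx => hJ.2 x hx) (hJ.2 1 le_rfl)
  simpa using (uniqueDiffOn_Ici 1 1 self_mem_Ici).eq_deriv _
    (hJ.1.1 1 zero_le_one).hasDerivWithinAt hwithin

theorem sub_eq_integral (hf₀ : IsJost Q₀ k f₀ f₀') (hf₁ : IsJost Q₁ k f₁ f₁')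
    (hφ : IsPhi Q₀ k φ φ') :
    f₁ 0 - f₀ 0 = ∫ x in (0:ℝ)..1, (Q₁ x - Q₀ x) * (φ x * f₁ x) := by
  have w₁ := hφ.1.wronskian_sub hf₁.1 zero_le_one
  have w₀ := hφ.1.wronskian_sub hf₀.1 zero_le_one
  simp only [sub_self, zero_mul, intervalIntegral.integral_zero] at w₀
  rw [hφ.2.1, hφ.2.2, hf₁.eq_one, hf₁.deriv_one] at w₁
  rw [hφ.2.1, hφ.2.2, hf₀.eq_one, hf₀.deriv_one] at w₀
  have hneg : ∫ x in (0:ℝ)..1, (Q₁ x - Q₀ x) * (φ x * f₁ x) =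
      -∫ x in (0:ℝ)..1, (Q₀ x - Q₁ x) * φ x * f₁ x := by
    rw [← intervalIntegral.integral_neg]
    congr 1 with x
    ring
  rw [hneg, ← w₁]
  linear_combination w₀

end IsJost

theorem MeasureTheory.Lp.integral_norm_le_norm {α E : Type*} [MeasurableSpace α]
    [NormedAddCommGroup E] {μ : Measure α} [IsProbabilityMeasure μ] {p : ℝ≥0∞} [Fact (1 ≤ p)]
    (f : Lp E p μ) : ∫ x, ‖f x‖ ∂μ ≤ ‖f‖ := by
  have hf := (Lp.memLp f).aestronglyMeasurable
  rw [integral_norm_eq_lintegral_enorm hf, ← eLpNorm_one_eq_lintegral_enorm, Lp.norm_def]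
  exact ENNReal.toReal_mono (Lp.eLpNorm_ne_top f)
    (eLpNorm_le_eLpNorm_of_exponent_le Fact.out hf)

theorem MeasureTheory.Lp.exists_continuousLinearMap_integral_mul {α : Type*} [MeasurableSpace α]
    {μ : Measure α} [IsProbabilityMeasure μ] {p : ℝ≥0∞} [Fact (1 ≤ p)] {g : α → ℂ} {C : ℝ}
    (hg : AEStronglyMeasurable g μ) (hC : ∀ᵐ x ∂μ, ‖g x‖ ≤ C) :
    ∃ L : Lp ℝ p μ →L[ℝ] ℂ, ∀ h : Lp ℝ p μ, L h = ∫ x, g x * (h x : ℂ) ∂μ := by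
  have hint : ∀ h : Lp ℝ p μ, Integrable (fun x => g x * (h x : ℂ)) μ := fun h =>
    ((Lp.memLp h).integrable Fact.out).ofReal.bdd_mul hg hC
  have hC0 : 0 ≤ C := by
    obtain ⟨x, hx⟩ := hC.exists
    exact (norm_nonneg _).trans hx
  let L : Lp ℝ p μ →ₗ[ℝ] ℂ :=
    { toFun := fun h => ∫ x, g x * (h x : ℂ) ∂μ
      map_add' := fun h₁ h₂ => by
        rw [← integral_add (hint h₁) (hint h₂)]
        refine integral_congr_ae ?_
        filter_upwards [Lp.coeFn_add h₁ h₂] with x hx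
        simp only [hx, Pi.add_apply, Complex.ofReal_add, mul_add]
      map_smul' := fun c h => by
        rw [RingHom.id_apply, ← integral_smul]
        refine integral_congr_ae ?_
        filter_upwards [Lp.coeFn_smul c h] with x hx
        simp only [hx, Pi.smul_apply, smul_eq_mul, Complex.ofReal_mul, Complex.real_smul]
        ring }
  refine ⟨L.mkContinuous C fun h => ?_, fun h => rfl⟩
  calc ‖∫ x, g x * (h x : ℂ) ∂μ‖ ≤ ∫ x, C * ‖h x‖ ∂μ := by
        refine norm_integral_le_of_norm_le (((Lp.memLp h).integrable Fact.out).norm.const_mul C) ?_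
        filter_upwards [hC] with x hx
        rw [norm_mul, Complex.norm_real]
        exact mul_le_mul_of_nonneg_right hx (norm_nonneg _)
    _ ≤ C * ‖h‖ := by
        rw [integral_const_mul]
        exact mul_le_mul_of_nonneg_left (Lp.integral_norm_le_norm h) hC0

instance : IsProbabilityMeasure (volume.restrict (Ioo (0:ℝ) 1)) :=
  ⟨by simp⟩

theorem integrable_extQ (q : Lp ℝ 2 (volume.restrict (Ioo (0:ℝ) 1))) : Integrable (extQ q) :=
  ((integrable_indicator_iff measurableSet_Ioo).2 ((Lp.memLp q).integrable one_le_two)).ofReal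

theorem extQ_add (q h : Lp ℝ 2 (volume.restrict (Ioo (0:ℝ) 1))) :
    extQ (q + h) =ᵐ[volume] fun x => extQ q x + extQ h x := by
  filter_upwards [(ae_restrict_iff' measurableSet_Ioo).1 (Lp.coeFn_add q h)] with x hx
  by_cases hmem : x ∈ Ioo (0:ℝ) 1
  · simp only [extQ, indicator_of_mem hmem, hx hmem, Pi.add_apply, Complex.ofReal_add]
  · simp [extQ, indicator_of_notMem hmem]

theorem intervalIntegral_mul_eq_extQ (q : Lp ℝ 2 (volume.restrict (Ioo (0:ℝ) 1))) (G : ℝ → ℂ) :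
    ∫ x in (0:ℝ)..1, G x * ((q : ℝ → ℝ) x : ℂ) = ∫ x in (0:ℝ)..1, extQ q x * G x := by
  rw [intervalIntegral.integral_of_le zero_le_one, intervalIntegral.integral_of_le zero_le_one,
    integral_Ioc_eq_integral_Ioo, integral_Ioc_eq_integral_Ioo]
  refine setIntegral_congr_fun measurableSet_Ioo fun x hx => ?_
  simp [extQ, indicator_of_mem hx, mul_comm]

theorem exists_continuousLinearMap_intervalIntegral_mul {G : ℝ → ℂ}
    (hG : ContinuousOn G (Icc 0 1)) :
    ∃ L : Lp ℝ 2 (volume.restrict (Ioo (0:ℝ) 1)) →L[ℝ] ℂ,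
      ∀ h, L h = ∫ x in (0:ℝ)..1, G x * ((h : ℝ → ℝ) x : ℂ) := by
  obtain ⟨M, hM⟩ := isCompact_Icc.exists_bound_of_continuousOn hG
  obtain ⟨L, hL⟩ := Lp.exists_continuousLinearMap_integral_mul
    (μ := volume.restrict (Ioo (0:ℝ) 1)) (p := 2)
    ((hG.mono Ioo_subset_Icc_self).aestronglyMeasurable measurableSet_Ioo)
    ((ae_restrict_iff' measurableSet_Ioo).2 (ae_of_all _ fun x hx => hM x (Ioo_subset_Icc_self hx)))
  refine ⟨L, fun h => ?_⟩
  rw [hL, intervalIntegral.integral_of_le zero_le_one, integral_Ioc_eq_integral_Ioo]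

theorem intervalIntegral_norm_extQ_le (q : Lp ℝ 2 (volume.restrict (Ioo (0:ℝ) 1))) :
    ∫ x in (0:ℝ)..1, ‖extQ q x‖ ≤ ‖q‖ := by
  rw [intervalIntegral.integral_of_le zero_le_one, integral_Ioc_eq_integral_Ioo,
    setIntegral_congr_fun measurableSet_Ioo (g := fun x => ‖(q : ℝ → ℝ) x‖)
      fun x hx => by simp [extQ, indicator_of_mem hx]]
  exact Lp.integral_norm_le_norm q

theorem intervalIntegral_norm_extQ_add_sub_le (q h : Lp ℝ 2 (volume.restrict (Ioo (0:ℝ) 1)))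
    (c : ℂ) :
    ∫ t in (0:ℝ)..1, ‖extQ (q + h) t - c‖ ≤ (∫ t in (0:ℝ)..1, ‖extQ q t‖) + ‖h‖ + ‖c‖ := by
  have hii : ∀ q, IntervalIntegrable (fun t => ‖extQ q t‖) volume 0 1 := fun q =>
    (integrable_extQ q).norm.intervalIntegrable
  calc ∫ t in (0:ℝ)..1, ‖extQ (q + h) t - c‖
      ≤ ∫ t in (0:ℝ)..1, (‖extQ q t‖ + ‖extQ h t‖ + ‖c‖) := by
        refine intervalIntegral.integral_mono_ae_restrict zero_le_one
          ((integrable_extQ _).intervalIntegrable.sub intervalIntegrable_const).norm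
          (((hii q).add (hii h)).add intervalIntegrable_const) ?_
        filter_upwards [ae_restrict_of_ae (extQ_add q h)] with t ht
        rw [ht]
        exact (norm_sub_le _ _).trans (by gcongr; exact norm_add_le _ _)
    _ = (∫ t in (0:ℝ)..1, ‖extQ q t‖) + (∫ t in (0:ℝ)..1, ‖extQ h t‖) + ‖c‖ := by
        rw [intervalIntegral.integral_add ((hii q).add (hii h)) intervalIntegrable_const,
          intervalIntegral.integral_add (hii q) (hii h)]
        simp
    _ ≤ (∫ t in (0:ℝ)..1, ‖extQ q t‖) + ‖h‖ + ‖c‖ := by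
        gcongr
        exact intervalIntegral_norm_extQ_le h

theorem intervalIntegral_norm_extQ_mul_le (q : Lp ℝ 2 (volume.restrict (Ioo (0:ℝ) 1)))
    {G : ℝ → ℂ} {M : ℝ} (hGc : ContinuousOn G (Icc 0 1)) (hG : ∀ x ∈ Icc (0:ℝ) 1, ‖G x‖ ≤ M) :
    ∫ x in (0:ℝ)..1, ‖extQ q x * G x‖ ≤ M * ‖q‖ := by
  have hM : 0 ≤ M := (norm_nonneg _).trans (hG 0 ⟨le_rfl, zero_le_one⟩)
  have hint : IntervalIntegrable (fun x => ‖extQ q x * G x‖) volume 0 1 :=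
    ((intervalIntegrable_iff_integrableOn_Icc_of_le zero_le_one).2
      ((integrable_extQ q).integrableOn.mul_continuousOn hGc isCompact_Icc)).norm
  calc ∫ x in (0:ℝ)..1, ‖extQ q x * G x‖ ≤ ∫ x in (0:ℝ)..1, ‖extQ q x‖ * M :=
        intervalIntegral.integral_mono_on zero_le_one hint
          ((integrable_extQ q).norm.intervalIntegrable.mul_const M) fun x hx => by
            rw [norm_mul]
            exact mul_le_mul_of_nonneg_left (hG x hx) (norm_nonneg _)
    _ ≤ ‖q‖ * M := by
        rw [intervalIntegral.integral_mul_const]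
        exact mul_le_mul_of_nonneg_right (intervalIntegral_norm_extQ_le q) hM
    _ = M * ‖q‖ := mul_comm _ _

theorem exists_norm_jost_sub_le {k : ℂ}
    {f f' : Lp ℝ 2 (volume.restrict (Ioo (0:ℝ) 1)) → ℝ → ℂ}
    (hf : ∀ q, IsJost (extQ q) k (f q) (f' q)) (q₀ : Lp ℝ 2 (volume.restrict (Ioo (0:ℝ) 1))) :
    ∃ C : ℝ, ∀ h : Lp ℝ 2 (volume.restrict (Ioo (0:ℝ) 1)), ‖h‖ ≤ 1 →
      ∀ x ∈ Icc (0:ℝ) 1, ‖f (q₀ + h) x - f q₀ x‖ ≤ C * ‖h‖ := by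
  have hf₀c := (hf q₀).1.continuousOn zero_le_one
  obtain ⟨M, hM⟩ := isCompact_Icc.exists_bound_of_continuousOn hf₀c
  set N := ⌈2 * ((∫ t in (0:ℝ)..1, ‖extQ q₀ t‖) + 1 + ‖k ^ 2‖)⌉₊
  refine ⟨2 * N.factorial * M, fun h hh x hx => ?_⟩
  have hN : ∫ t in (0:ℝ)..1, ‖extQ (q₀ + h) t - k ^ 2‖ ≤ N / 2 := by
    have := Nat.le_ceil (2 * ((∫ t in (0:ℝ)..1, ‖extQ q₀ t‖) + 1 + ‖k ^ 2‖))
    linarith [intervalIntegral_norm_extQ_add_sub_le q₀ h (k ^ 2)]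
  have hρ : ∫ t in (0:ℝ)..1, ‖(extQ (q₀ + h) t - extQ q₀ t) * f q₀ t‖ ≤ M * ‖h‖ := by
    rw [intervalIntegral.integral_congr_ae (g := fun t => ‖extQ h t * f q₀ t‖)
      (by filter_upwards [extQ_add q₀ h] with t ht _; simp [ht])]
    exact intervalIntegral_norm_extQ_mul_le h hf₀c hM
  calc ‖f (q₀ + h) x - f q₀ x‖
      ≤ 2 * N.factorial * ∫ t in (0:ℝ)..1, ‖(extQ (q₀ + h) t - extQ q₀ t) * f q₀ t‖ :=
        (hf (q₀ + h)).1.norm_sub_le (hf q₀).1 (integrable_extQ _).integrableOn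
          ((hf (q₀ + h)).eq_one.trans (hf q₀).eq_one.symm)
          ((hf (q₀ + h)).deriv_one.trans (hf q₀).deriv_one.symm) hN hx
    _ ≤ 2 * N.factorial * (M * ‖h‖) := by gcongr
    _ = 2 * N.factorial * M * ‖h‖ := by ring

theorem jost_sub_sub_integral_eq {k : ℂ}
    {f f' φ φ' : Lp ℝ 2 (volume.restrict (Ioo (0:ℝ) 1)) → ℝ → ℂ}
    (hf : ∀ q, IsJost (extQ q) k (f q) (f' q)) (hφ : ∀ q, IsPhi (extQ q) k (φ q) (φ' q))
    (q₀ h : Lp ℝ 2 (volume.restrict (Ioo (0:ℝ) 1))) :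
    f (q₀ + h) 0 - f q₀ 0 - ∫ x in (0:ℝ)..1, φ q₀ x * f q₀ x * ((h : ℝ → ℝ) x : ℂ) =
      ∫ x in (0:ℝ)..1, extQ h x * (φ q₀ x * (f (q₀ + h) x - f q₀ x)) := by
  have hφc := (hφ q₀).1.continuousOn zero_le_one
  have hii : ∀ {F : ℝ → ℂ}, Integrable F → ∀ {G : ℝ → ℂ}, ContinuousOn G (Icc 0 1) →
      IntervalIntegrable (fun x => F x * G x) volume 0 1 := fun hF _ hG =>
    (intervalIntegrable_iff_integrableOn_Icc_of_le zero_le_one).2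
      (hF.integrableOn.mul_continuousOn hG isCompact_Icc)
  rw [(hf q₀).sub_eq_integral (hf (q₀ + h)) (hφ q₀), intervalIntegral_mul_eq_extQ,
    ← intervalIntegral.integral_sub
      (hii (F := fun x => extQ (q₀ + h) x - extQ q₀ x)
        ((integrable_extQ _).sub (integrable_extQ _)) (G := fun x => φ q₀ x * f (q₀ + h) x)
        (hφc.mul ((hf (q₀ + h)).1.continuousOn zero_le_one)))
      (hii (integrable_extQ h) (G := fun x => φ q₀ x * f q₀ x)
        (hφc.mul ((hf q₀).1.continuousOn zero_le_one)))]
  refine intervalIntegral.integral_congr_ae ?_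
  filter_upwards [extQ_add q₀ h] with x hx _
  simp only [hx]
  ring

/-- For fixed `k`, the map `q ↦ ψ(k,q)` is Fréchet differentiable on
`L²((0,1),ℝ)`, with derivative `h ↦ ∫₀¹ φ(x,k,q₀) f₊(x,k,q₀) h(x) dx` at `q₀`. -/
theorem statement17 (k : ℂ)
    (f f' φ φ' : Lp ℝ 2 (volume.restrict (Ioo (0:ℝ) 1)) → ℝ → ℂ)
    (hf : ∀ q, IsJost (extQ q) k (f q) (f' q))
    (hφ : ∀ q, IsPhi (extQ q) k (φ q) (φ' q))
    (q₀ : Lp ℝ 2 (volume.restrict (Ioo (0:ℝ) 1))) :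
    ∃ L : Lp ℝ 2 (volume.restrict (Ioo (0:ℝ) 1)) →L[ℝ] ℂ,
      (∀ h : Lp ℝ 2 (volume.restrict (Ioo (0:ℝ) 1)),
        L h = ∫ x in (0:ℝ)..1, φ q₀ x * f q₀ x * ((h : ℝ → ℝ) x : ℂ)) ∧
      HasFDerivAt (fun q => f q 0) L q₀ := by
  have hφc := (hφ q₀).1.continuousOn zero_le_one
  obtain ⟨Mφ, hMφ⟩ := isCompact_Icc.exists_bound_of_continuousOn hφc
  obtain ⟨L, hL⟩ := exists_continuousLinearMap_intervalIntegral_mul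
    (G := fun x => φ q₀ x * f q₀ x) (hφc.mul ((hf q₀).1.continuousOn zero_le_one))
  obtain ⟨C, hC⟩ := exists_norm_jost_sub_le hf q₀
  refine ⟨L, hL, ?_⟩
  rw [hasFDerivAt_iff_isLittleO_nhds_zero]
  refine (Asymptotics.IsBigO.of_bound (Mφ * C) ?_).trans_isLittleO
    (Asymptotics.isLittleO_norm_pow_id one_lt_two)
  filter_upwards [Metric.closedBall_mem_nhds 0 one_pos] with h hh
  rw [mem_closedBall_zero_iff] at hh
  rw [hL, jost_sub_sub_integral_eq hf hφ, norm_pow, norm_norm]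
  calc _ ≤ ∫ x in (0:ℝ)..1, ‖extQ h x * (φ q₀ x * (f (q₀ + h) x - f q₀ x))‖ :=
        intervalIntegral.norm_integral_le_integral_norm zero_le_one
    _ ≤ Mφ * (C * ‖h‖) * ‖h‖ := by
        refine intervalIntegral_norm_extQ_mul_le h
          (hφc.mul (((hf (q₀ + h)).1.continuousOn zero_le_one).sub
            ((hf q₀).1.continuousOn zero_le_one))) fun x hx => ?_
        rw [norm_mul]
        exact mul_le_mul (hMφ x hx) (hC h hh x hx) (norm_nonneg _)
          ((norm_nonneg _).trans (hMφ x hx))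
    _ = Mφ * C * ‖h‖ ^ 2 := by ring
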